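/- arXiv:1806.08754 — 2 statements merged into one kernel-verified Lean document; each statement's English description precedes it below -/
import Mathlib

section
/- Let F be a field of characteristic 0, n ≥ 1, and let E be a forest of oriented edges on {1,…,n}. Then the F-linear span in K = F(z_1,…,z_n) of all iterated partial derivatives ∂_{z_1}^{a_1}⋯∂_{z_n}^{a_n} p_E (a_1,…,a_n ≥ 0) equals the F-linear span of the set { ∏_{(i,j) ∈ E} (z_i − z_j)^{−m_{ij}} : m_{ij} ≥ 1 for every (i,j) ∈ E }. Equivalently, the F[∂_{z_1},…,∂_{z_n}]-submodule of K generated by p_E coincides with F[(z_i − z_j)^{−1} : (i,j) ∈ E]·p_E. -/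
/-!
Each `∂_u` sends `∏ (z_i - z_j)^{-m_ij}` to a combination of the same monomials with one
exponent raised, so the span of monomials with all `m_ij ≥ 1` contains every derivative of `p_E`.
Conversely, induct on the forest by removing a leaf edge `e` at a vertex `v`: `∂_v` only sees the
factor of `e`, so `∂_v^k p_E` is a nonzero multiple of `p_{E∖e} (z_{e.1} - z_{e.2})^{-k-1}`, and
the derivations `∂_u - c_u ∂_v` which annihilate `z_{e.1} - z_{e.2}` act on `E ∖ e` exactly as
the `∂_u` do, so the induction hypothesis applies to them with that factor as a constant.
The span of the derivatives of `p_E` is stable under the `∂_u` because they commute, which holds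
since their commutators are derivations vanishing on the generators `z_i`.
-/

open Finset

theorem SimpleGraph.IsAcyclic.exists_existsUnique_adj {V : Type*} {G : SimpleGraph V}
    [Finite G.edgeSet] (hG : G.IsAcyclic) {a b : V} (hab : G.Adj a b) :
    ∃ u, ∃! w, G.Adj u w := by
  have : Nonempty V := ⟨a⟩
  obtain ⟨u, v, p, hp, hmax⟩ := SimpleGraph.Walk.exists_isPath_forall_isPath_length_le_length G
  have hnil : ¬p.Nil := by
    have := hmax a b (.cons hab .nil) (by simp [hab.ne])
    grind [SimpleGraph.Walk.length_cons]
  refine ⟨u, _, p.adj_snd hnil, fun w hadj ↦ hG.eq_snd_of_adj_start hp hadj ?_⟩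
  have : ¬(p.cons hadj.symm).IsPath := by grind [SimpleGraph.Walk.length_cons]
  grind [hp.cons]

open scoped IsMulCommutative in
theorem mul_listOfFn_pow_prod {M : Type*} [Monoid M] {n : ℕ} {d : Fin n → M}
    (h : ∀ i j, Commute (d i) (d j)) (a : Fin n → ℕ) (i : Fin n) :
    d i * (List.ofFn fun j => d j ^ a j).prod
      = (List.ofFn fun j => d j ^ (a + Pi.single i 1 : Fin n → ℕ) j).prod := by
  have := Submonoid.isMulCommutative_closure M (s := Set.range d)
    (by rintro _ ⟨i, rfl⟩ _ ⟨j, rfl⟩; exact h i j)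
  let d' : Fin n → Submonoid.closure (Set.range d) :=
    fun j => ⟨d j, Submonoid.subset_closure ⟨j, rfl⟩⟩
  have hprod (b : Fin n → ℕ) :
      (List.ofFn fun j => d j ^ b j).prod = ((∏ j, d' j ^ b j : _) : M) := by
    rw [← List.prod_ofFn, Submonoid.coe_list_prod, List.map_ofFn]
    rfl
  rw [hprod, hprod, show d i = d' i from rfl, ← Submonoid.coe_mul]
  congr 1
  simp only [Pi.add_apply, pow_add, prod_mul_distrib]
  rw [mul_comm]
  congr 1
  rw [Fintype.prod_eq_single i fun j hj => by rw [Pi.single_eq_of_ne hj, pow_zero],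
    Pi.single_eq_same, pow_one]

theorem Module.End.mapsTo_listOfFn_pow_prod {R M : Type*} [Semiring R] [AddCommMonoid M]
    [Module R M] {N : Submodule R M} {n : ℕ} {d : Fin n → Module.End R M}
    (hd : ∀ i, Set.MapsTo (d i) N N) (a : Fin n → ℕ) :
    Set.MapsTo (List.ofFn fun i => d i ^ a i).prod N N := by
  have hclosure : ∀ f ∈ Submonoid.closure (Set.range d), Set.MapsTo f N N := fun _ hf ↦
    Submonoid.closure_induction (by rintro _ ⟨i, rfl⟩; exact hd i) (Set.mapsTo_id _)
      (fun _ _ _ _ hf hg ↦ hf.comp hg) hf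
  refine hclosure _ (Submonoid.list_prod_mem _ ?_)
  simp only [List.mem_ofFn', Set.forall_mem_range]
  exact fun i ↦ pow_mem (Submonoid.subset_closure (Set.mem_range_self i)) _

theorem Module.End.mapsTo_span_listOfFn_pow_prod {R M : Type*} [Semiring R] [AddCommMonoid M]
    [Module R M] {n : ℕ} {d : Fin n → Module.End R M} (h : ∀ i j, Commute (d i) (d j)) (x : M)
    (u : Fin n) :
    Set.MapsTo (d u)
      (Submodule.span R {y | ∃ a : Fin n → ℕ, y = (List.ofFn fun i => d i ^ a i).prod x})
      (Submodule.span R {y | ∃ a : Fin n → ℕ, y = (List.ofFn fun i => d i ^ a i).prod x}) := by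
  refine fun y hy ↦ (Submodule.span_le (p := (Submodule.span R _).comap (d u))).2 ?_ hy
  rintro _ ⟨a, rfl⟩
  exact Submodule.subset_span ⟨a + Pi.single u 1, by rw [← mul_listOfFn_pow_prod h]; rfl⟩

namespace Derivation

theorem leibniz_prod {R A M : Type*} [CommSemiring R] [CommSemiring A] [Algebra R A]
    [AddCommMonoid M] [Module A M] [Module R M] (D : Derivation R A M)
    {ι : Type*} [DecidableEq ι] (s : Finset ι) (f : ι → A) :
    D (∏ i ∈ s, f i) = ∑ i ∈ s, (∏ j ∈ s.erase i, f j) • D (f i) := by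
  induction s using Finset.induction_on with
  | empty => simp
  | insert a s ha ih =>
    rw [prod_insert ha, leibniz, ih, sum_insert ha, erase_insert ha, smul_sum, add_comm]
    congr 1
    refine sum_congr rfl fun i hi ↦ ?_
    rw [erase_insert_of_ne (ne_of_mem_of_not_mem hi ha).symm,
      prod_insert fun h ↦ ha (mem_of_mem_erase h), mul_smul]

theorem iterate_mul_of_apply_eq_zero {R A : Type*} [CommSemiring R] [CommSemiring A]
    [Algebra R A] (D : Derivation R A A) {a : A} (ha : D a = 0) (b : A) (k : ℕ) :
    (⇑D)^[k] (a * b) = a * (⇑D)^[k] b := by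
  induction k with
  | zero => rfl
  | succ k ih =>
    rw [Function.iterate_succ_apply', Function.iterate_succ_apply', ih, leibniz, ha, smul_zero,
      add_zero, smul_eq_mul]

section Field

variable {R K : Type*} [CommRing R] [Field K] [Algebra R K] (D : Derivation R K K)

theorem leibniz_inv_pow (a : K) (m : ℕ) : D (a⁻¹ ^ m) = -(m * a⁻¹ ^ (m + 1) * D a) := by
  rw [leibniz_pow, leibniz_inv]
  rcases m with _ | m
  · simp
  · simp only [nsmul_eq_mul, smul_eq_mul, Nat.add_sub_cancel]
    ring

theorem iterate_inv {a : K} {c : R} (hc : D a = algebraMap R K c) (k : ℕ) :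
    (⇑D)^[k] a⁻¹ = algebraMap R K ((-c) ^ k * k.factorial) * a⁻¹ ^ (k + 1) := by
  induction k with
  | zero => simp
  | succ k ih =>
    rw [Function.iterate_succ_apply', ih, leibniz, leibniz_inv_pow, map_algebraMap, hc,
      Nat.factorial_succ]
    simp only [smul_eq_mul, map_mul, map_pow, map_neg]
    push_cast
    ring

end Field

theorem ext_of_intermediateField_adjoin_eq_top {F K M : Type*} [Field F] [Field K]
    [Algebra F K] [AddCommGroup M] [Module K M] [Module F M] {D₁ D₂ : Derivation F K M}
    {s : Set K} (hs : IntermediateField.adjoin F s = ⊤) (h : Set.EqOn D₁ D₂ s) : D₁ = D₂ := by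
  ext x
  have hx : x ∈ IntermediateField.adjoin F s := hs ▸ IntermediateField.mem_top
  induction hx using IntermediateField.adjoin_induction with
  | mem x hx => exact h hx
  | algebraMap r => simp only [map_algebraMap]
  | add x y _ _ hx hy => simp only [map_add, hx, hy]
  | inv x _ hx => rw [leibniz_inv, leibniz_inv, hx]
  | mul x y _ _ hx hy => simp only [leibniz, hx, hy]

theorem commute_of_intermediateField_adjoin_eq_top {F K : Type*} [Field F] [Field K]
    [Algebra F K] {s : Set K} (hs : IntermediateField.adjoin F s = ⊤)
    {D₁ D₂ : Derivation F K K} (h : ∀ x ∈ s, D₁ (D₂ x) = D₂ (D₁ x)) :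
    Commute (D₁ : Module.End F K) D₂ := by
  have hbracket : ⁅D₁, D₂⁆ = 0 :=
    ext_of_intermediateField_adjoin_eq_top hs fun x hx ↦ by
      rw [commutator_apply, h x hx, sub_self, zero_apply]
  refine LinearMap.ext fun x ↦ sub_eq_zero.1 ?_
  simpa [commutator_apply] using DFunLike.congr_fun hbracket x

end Derivation

section EdgeMonomial

variable {ι F K : Type*} [Field F] [Field K] [Algebra F K] (z : ι → K)

def edgeMonomial (E : Finset (ι × ι)) (m : ι × ι → ℕ) : K :=
  ∏ e ∈ E, (z e.1 - z e.2)⁻¹ ^ m e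

def edgeMonomials (E : Finset (ι × ι)) : Set K :=
  {x | ∃ m : ι × ι → ℕ, (∀ e ∈ E, 1 ≤ m e) ∧ x = edgeMonomial z E m}

variable [DecidableEq ι] {E : Finset (ι × ι)} {e : ι × ι}

theorem edgeMonomial_eq_mul_erase (he : e ∈ E) (m : ι × ι → ℕ) :
    edgeMonomial z E m = (z e.1 - z e.2)⁻¹ ^ m e * edgeMonomial z (E.erase e) m :=
  (mul_prod_erase E _ he).symm

theorem edgeMonomial_add_single (he : e ∈ E) (m : ι × ι → ℕ) :
    edgeMonomial z E (m + Pi.single e 1) = edgeMonomial z E m * (z e.1 - z e.2)⁻¹ := by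
  simp only [edgeMonomial, Pi.add_apply, pow_add, prod_mul_distrib]
  congr 1
  rw [prod_eq_single_of_mem e he fun e' _ he' ↦ by rw [Pi.single_eq_of_ne he', pow_zero],
    Pi.single_eq_same, pow_one]

theorem Derivation.apply_edgeMonomial (D : Derivation F K K) {c : ι × ι → F}
    (hc : ∀ e ∈ E, D (z e.1 - z e.2) = algebraMap F K (c e)) (m : ι × ι → ℕ) :
    D (edgeMonomial z E m) = ∑ e ∈ E, (-(m e * c e)) • edgeMonomial z E (m + Pi.single e 1) := by
  rw [edgeMonomial, D.leibniz_prod]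
  refine sum_congr rfl fun e he ↦ ?_
  rw [edgeMonomial_add_single z he, edgeMonomial_eq_mul_erase z he, D.leibniz_inv_pow, hc e he,
    smul_eq_mul, Algebra.smul_def, edgeMonomial]
  simp only [map_neg, map_mul, _root_.map_natCast]
  ring

theorem Derivation.mapsTo_span_edgeMonomials (D : Derivation F K K) {c : ι × ι → F}
    (hc : ∀ e ∈ E, D (z e.1 - z e.2) = algebraMap F K (c e)) :
    Set.MapsTo D (Submodule.span F (edgeMonomials z E)) (Submodule.span F (edgeMonomials z E)) := by
  refine fun x hx ↦ (Submodule.span_le (p := (Submodule.span F _).comap (D : K →ₗ[F] K))).2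
    ?_ hx
  rintro _ ⟨m, hm, rfl⟩
  rw [SetLike.mem_coe, Submodule.mem_comap, Derivation.coeFn_coe, D.apply_edgeMonomial z hc]
  refine Submodule.sum_mem _ fun e _ ↦ Submodule.smul_mem _ _ (Submodule.subset_span ?_)
  exact ⟨_, fun e' he' ↦ (hm e' he').trans (Nat.le_add_right _ _), rfl⟩

end EdgeMonomial

section Forest

variable {ι : Type*}

structure IsOrientedForest (E : Finset (ι × ι)) : Prop where
  ne : ∀ e ∈ E, e.1 ≠ e.2
  swap_notMem : ∀ a b, (a, b) ∈ E → (b, a) ∉ E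
  isAcyclic : (SimpleGraph.fromRel fun a b ↦ (a, b) ∈ E).IsAcyclic

variable {E : Finset (ι × ι)}

theorem IsOrientedForest.mono {E' : Finset (ι × ι)} (h : IsOrientedForest E) (hE' : E' ⊆ E) :
    IsOrientedForest E' where
  ne e he := h.ne e (hE' he)
  swap_notMem a b hab hba := h.swap_notMem a b (hE' hab) (hE' hba)
  isAcyclic := h.isAcyclic.anti fun a b hab ↦ by
    rw [SimpleGraph.fromRel_adj] at hab ⊢
    exact ⟨hab.1, hab.2.imp (@hE' _) (@hE' _)⟩

theorem IsOrientedForest.exists_leaf (h : IsOrientedForest E) (hne : E.Nonempty) :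
    ∃ e ∈ E, ∃ v, (v = e.1 ∨ v = e.2) ∧ ∀ e' ∈ E, e' ≠ e → v ≠ e'.1 ∧ v ≠ e'.2 := by
  set G := SimpleGraph.fromRel fun a b ↦ (a, b) ∈ E
  have hadj {a b} : G.Adj a b ↔ a ≠ b ∧ ((a, b) ∈ E ∨ (b, a) ∈ E) := SimpleGraph.fromRel_adj ..
  have : Finite G.edgeSet := by
    refine ((E.finite_toSet.image fun e ↦ s(e.1, e.2)).subset ?_).to_subtype
    rintro ⟨a, b⟩ hab
    rcases (hadj.1 hab).2 with h | h
    · exact ⟨_, h, rfl⟩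
    · exact ⟨_, h, Sym2.eq_swap⟩
  obtain ⟨e₀, he₀⟩ := hne
  obtain ⟨u, w, huw, huniq⟩ :=
    h.isAcyclic.exists_existsUnique_adj (hadj.2 ⟨h.ne e₀ he₀, .inl he₀⟩)
  have hinc : ∀ e' ∈ E, (u = e'.1 ∨ u = e'.2) → e' = (u, w) ∨ e' = (w, u) := by
    rintro ⟨a, b⟩ he' (rfl | rfl)
    · grind [h.ne _ he']
    · grind [h.ne _ he']
  rcases (hadj.1 huw).2 with he | he
  · refine ⟨_, he, u, .inl rfl, fun e' he' hne' ↦ ?_⟩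
    grind [h.swap_notMem u w he]
  · refine ⟨_, he, u, .inr rfl, fun e' he' hne' ↦ ?_⟩
    grind [h.swap_notMem w u he]

end Forest

section Incidence

variable {ι R : Type*} [DecidableEq ι] [Ring R]

def incidence (u : ι) (e : ι × ι) : R :=
  (if u = e.1 then 1 else 0) - (if u = e.2 then 1 else 0)

theorem incidence_eq_zero {u : ι} {e : ι × ι} (h₁ : u ≠ e.1) (h₂ : u ≠ e.2) :
    incidence u e = (0 : R) := by
  simp [incidence, h₁, h₂]

theorem incidence_ne_zero [Nontrivial R] {u : ι} {e : ι × ι} (he : e.1 ≠ e.2)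
    (hu : u = e.1 ∨ u = e.2) : incidence u e ≠ (0 : R) := by
  rcases hu with rfl | rfl
  · simp [incidence, he]
  · simp [incidence, he.symm]

end Incidence

section

variable {ι F K : Type*} [DecidableEq ι] [Field F] [CharZero F] [Field K] [Algebra F K]
  (z : ι → K) {E : Finset (ι × ι)}

theorem Derivation.edgeMonomial_erase_mul_mem (D : Derivation F K K) {e : ι × ι} (he : e ∈ E)
    {c : F} (hc : c ≠ 0) (hDe : D (z e.1 - z e.2) = algebraMap F K c)
    (hDE : ∀ e' ∈ E.erase e, D (z e'.1 - z e'.2) = 0) {M : Submodule F K}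
    (hM : Set.MapsTo D M M) {q : K} (hq : D q = 0) (hpq : edgeMonomial z E 1 * q ∈ M) (k : ℕ) :
    edgeMonomial z (E.erase e) 1 * ((z e.1 - z e.2)⁻¹ ^ (k + 1) * q) ∈ M := by
  have hkill : D (edgeMonomial z (E.erase e) 1 * q) = 0 := by
    rw [leibniz, hq,
      D.apply_edgeMonomial z (c := 0) fun e' he' ↦ by rw [hDE e' he', Pi.zero_apply, map_zero]]
    simp
  have hck : (-c) ^ k * k.factorial ≠ 0 := by
    simp [hc, Nat.factorial_ne_zero]
  have : (⇑D)^[k] (edgeMonomial z E 1 * q) ∈ M := hM.iterate k hpq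
  rw [edgeMonomial_eq_mul_erase z he, Pi.one_apply, pow_one, mul_comm _ (edgeMonomial _ _ _),
    mul_assoc, mul_comm _⁻¹, ← mul_assoc, D.iterate_mul_of_apply_eq_zero hkill,
    D.iterate_inv hDe] at this
  rw [← Submodule.smul_mem_iff M hck]
  convert this using 1
  rw [Algebra.smul_def]
  ring

theorem IsOrientedForest.edgeMonomial_mul_mem (hE : IsOrientedForest E)
    (D : ι → Derivation F K K)
    (hD : ∀ u, ∀ e ∈ E, D u (z e.1 - z e.2) = algebraMap F K (incidence u e))
    {M : Submodule F K} (hM : ∀ u, Set.MapsTo (D u) M M) {q : K} (hq : ∀ u, D u q = 0)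
    (hpq : edgeMonomial z E 1 * q ∈ M) {m : ι × ι → ℕ} (hm : ∀ e ∈ E, 1 ≤ m e) :
    edgeMonomial z E m * q ∈ M := by
  induction E using Finset.strongInduction generalizing D M q with
  | H E ih =>
    rcases E.eq_empty_or_nonempty with rfl | hne
    · simpa [edgeMonomial] using hpq
    obtain ⟨e, he, v, hv, hleaf⟩ := hE.exists_leaf hne
    have hs : incidence v e ≠ (0 : F) := incidence_ne_zero (hE.ne e he) hv
    have hvE' : ∀ e' ∈ E.erase e, incidence v e' = (0 : F) := fun e' he' ↦
      incidence_eq_zero (hleaf e' (mem_of_mem_erase he') (ne_of_mem_erase he')).1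
        (hleaf e' (mem_of_mem_erase he') (ne_of_mem_erase he')).2
    obtain ⟨k, hk⟩ : ∃ k, m e = k + 1 := ⟨m e - 1, by have := hm e he; omega⟩
    let D' (u : ι) : Derivation F K K := D u - (incidence u e / incidence v e : F) • D v
    have hD' : ∀ u, ∀ e' ∈ E.erase e,
        D' u (z e'.1 - z e'.2) = algebraMap F K (incidence u e') := fun u e' he' ↦ by
      simp [D', hD u e' (mem_of_mem_erase he'), hD v e' (mem_of_mem_erase he'), hvE' e' he']
    have hD'e : ∀ u, D' u (z e.1 - z e.2) = 0 := fun u ↦ by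
      simp only [D', Derivation.sub_apply, Derivation.smul_apply, hD u e he, hD v e he,
        Algebra.smul_def, ← map_mul, div_mul_cancel₀ _ hs, sub_self]
    have hq' : ∀ u, D' u ((z e.1 - z e.2)⁻¹ ^ (k + 1) * q) = 0 := fun u ↦ by
      rw [Derivation.leibniz, Derivation.leibniz_inv_pow, hD'e]
      simp [D', hq]
    have hpq' := (D v).edgeMonomial_erase_mul_mem z he hs (hD v e he)
      (fun e' he' ↦ by rw [hD v e' (mem_of_mem_erase he'), hvE' e' he', map_zero]) (hM v)
      (hq v) hpq k
    have := ih (E.erase e) (erase_ssubset he) (hE.mono (erase_subset e E)) D' hD'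
      (fun u y hy ↦ M.sub_mem (hM u hy) (M.smul_mem _ (hM v hy))) hq' hpq'
      fun e' he' ↦ hm e' (mem_of_mem_erase he')
    rw [edgeMonomial_eq_mul_erase z he, hk]
    convert this using 1
    ring

end

theorem span_derivatives_forest_general
    (F K : Type*) [Field F] [CharZero F] [Field K] [Algebra F K]
    (n : ℕ) (z : Fin n → K)
    (hgen : IntermediateField.adjoin F (Set.range z) = ⊤)
    (D : Fin n → Module.End F K)
    (hLeib : ∀ (i : Fin n) (x y : K), D i (x * y) = x * D i y + D i x * y)
    (hDz : ∀ i j : Fin n, D i (z j) = if i = j then 1 else 0)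
    (E : Finset (Fin n × Fin n))
    (hE : ∀ e ∈ E, e.1 ≠ e.2)
    (hE' : ∀ a b : Fin n, (a, b) ∈ E → (b, a) ∉ E)
    (hforest : (SimpleGraph.fromRel fun a b : Fin n => (a, b) ∈ E).IsAcyclic) :
    Submodule.span F {x : K | ∃ a : Fin n → ℕ,
        x = ((List.ofFn fun i => D i ^ a i).prod)
          (∏ e ∈ E, (z e.1 - z e.2)⁻¹)} =
      Submodule.span F {x : K | ∃ m : Fin n × Fin n → ℕ,
        (∀ e ∈ E, 1 ≤ m e) ∧ x = ∏ e ∈ E, ((z e.1 - z e.2)⁻¹) ^ m e} := by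
  let δ i : Derivation F K K := .mk' (D i) fun x y ↦ by
    rw [hLeib, smul_eq_mul, smul_eq_mul, mul_comm (D i x)]
  have hδz : ∀ i j, δ i (z j) = if i = j then 1 else 0 := hDz
  have hδ : ∀ u, ∀ e ∈ E, δ u (z e.1 - z e.2) = algebraMap F K (incidence u e) := by
    intro u e _
    simp [hδz, incidence, apply_ite (algebraMap F K)]
  have hcomm i j : Commute (D i) (D j) :=
    Derivation.commute_of_intermediateField_adjoin_eq_top (D₁ := δ i) (D₂ := δ j) hgen <| by
      rintro _ ⟨k, rfl⟩
      rw [hδz, hδz]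
      split_ifs <;> simp
  have hpE : ∏ e ∈ E, (z e.1 - z e.2)⁻¹ = edgeMonomial z E 1 := by simp [edgeMonomial]
  refine le_antisymm (Submodule.span_le.2 ?_) (Submodule.span_le.2 ?_)
  · rintro _ ⟨a, rfl⟩
    exact Module.End.mapsTo_listOfFn_pow_prod
      (fun u ↦ (δ u).mapsTo_span_edgeMonomials z (hδ u)) a
      (Submodule.subset_span ⟨1, fun _ _ ↦ le_rfl, hpE⟩)
  · rintro _ ⟨m, hm, rfl⟩
    simpa only [mul_one, SetLike.mem_coe, edgeMonomial] using
      (IsOrientedForest.mk hE hE' hforest).edgeMonomial_mul_mem z δ hδ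
        (Module.End.mapsTo_span_listOfFn_pow_prod hcomm _) (q := 1) (by simp)
        (by rw [mul_one, ← hpE]; exact Submodule.subset_span ⟨0, by simp⟩) hm

/-- **Lemma 6.2 of Bakalov–De Sole–Heluani–Kac**: let `F` be a field of characteristic
`0` and `K = F(z_1,…,z_n)` the rational function field in `n ≥ 1` variables (formalized
as a field extension generated by an algebraically independent family `z`), with partial
derivatives `D i = ∂_{z_i}`. Let `E` be a forest of oriented edges on `{1,…,n}`: a finite
set of ordered pairs of distinct indices whose underlying undirected simple graph is
acyclic and which contains no two pairs with the same underlying unordered pair, and let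
`p_E = ∏_{(i,j) ∈ E} (z_i - z_j)⁻¹`. Then the `F`-linear span of all iterated partial
derivatives of `p_E` equals the `F`-linear span of the functions
`∏_{(i,j) ∈ E} (z_i - z_j)^{-m_{ij}}` with all `m_{ij} ≥ 1`. -/
theorem span_derivatives_forest
    (F K : Type*) [Field F] [CharZero F] [Field K] [Algebra F K]
    (n : ℕ) (hn : 1 ≤ n) (z : Fin n → K)
    (hz : AlgebraicIndependent F z)
    (hgen : IntermediateField.adjoin F (Set.range z) = ⊤)
    (D : Fin n → Module.End F K)
    (hLeib : ∀ (i : Fin n) (x y : K), D i (x * y) = x * D i y + D i x * y)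
    (hDz : ∀ i j : Fin n, D i (z j) = if i = j then 1 else 0)
    (E : Finset (Fin n × Fin n))
    (hE : ∀ e ∈ E, e.1 ≠ e.2)
    (hE' : ∀ a b : Fin n, (a, b) ∈ E → (b, a) ∉ E)
    (hforest : (SimpleGraph.fromRel fun a b : Fin n => (a, b) ∈ E).IsAcyclic) :
    Submodule.span F {x : K | ∃ a : Fin n → ℕ,
        x = ((List.ofFn fun i => D i ^ a i).prod)
          (∏ e ∈ E, (z e.1 - z e.2)⁻¹)} =
      Submodule.span F {x : K | ∃ m : Fin n × Fin n → ℕ,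
        (∀ e ∈ E, 1 ≤ m e) ∧ x = ∏ e ∈ E, ((z e.1 - z e.2)⁻¹) ^ m e} :=
  span_derivatives_forest_general F K n z hgen D hLeib hDz E hE hE' hforest
end

section
/- Let F be a field of characteristic 0, n ≥ 1 and r ≥ 0. Then fil^r equals the smallest F-linear subspace of K = F(z_1,…,z_n) that contains p_E for every forest E of oriented edges on {1,…,n} with at most r edges and that is stable under multiplication by each difference z_i − z_j (1 ≤ i < j ≤ n) and under each partial derivation ∂_{z_1},…,∂_{z_n}. In other words, the filtration component fil^r of the algebra of translation-invariant rational functions regular away from the diagonals is generated, as a module over the translation-invariant polynomial-coefficient differential operators, by the functions p_E attached to acyclic graphs with at most r edges. -/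
/-!
Write `d_e = z_i - z_j` for an oriented edge `e = (i, j)` and let `W` be a subspace with the three
stability properties. As `W` is stable under multiplication by the differences, it suffices to
show that each monomial `∏_{e ∈ E} d_e^{-m_e}` with all `m_e ≥ 1` and `|E| ≤ r` lies in `W`.

If the `d_e` (`e ∈ E`) are linearly dependent, a relation `∑ c_e d_e = 0` solved for `d_{e₀}`
turns `d_{e₀} · ∏ d_e^{-m_e}` (with `m_{e₀}` raised by one) into a combination of monomials in
which the exponent of some other edge has dropped by one; iterating, an edge eventually
disappears (partial fractions), so one inducts on `|E|` and on those exponents.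

If they are independent, `E` is a forest, because going around a cycle the differences
telescope to a linear relation; hence `p_E ∈ W`. A functional dual to the family `(d_e)` gives a
derivation `δ = ∑_a λ_a ∂_{z_a}` with `δ d_e = [e = e₀]` on `E`, and
`δ (∏ d_e^{-m_e}) = -m_{e₀} d_{e₀}^{-1} ∏ d_e^{-m_e}` raises the exponent of `e₀` alone; in
characteristic `0` the factor `m_{e₀}` can be divided out.

Conversely, `fil^r` contains every `p_E` and is stable under multiplication by the differences and
under derivations, which send each `d_e` to a constant.
-/

/-- The pole filtration of the algebra of rational functions regular away from the
diagonals: `fil F K z r` is the `F`-linear span of all elements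
`g · (z_{i_1} - z_{j_1})^{-m_1} ⋯ (z_{i_s} - z_{j_s})^{-m_s}` with `s ≤ r` divisors,
distinct underlying unordered pairs `{i_t, j_t}`, exponents `m_t ≥ 1`, and `g` a
polynomial in the differences `z_i - z_j`. -/
noncomputable def fil (F : Type*) {K : Type*} [Field F] [Field K] [Algebra F K]
    {n : ℕ} (z : Fin n → K) (r : ℕ) : Submodule F K :=
  Submodule.span F {x : K | ∃ s : ℕ, s ≤ r ∧
    ∃ (i j : Fin s → Fin n) (m : Fin s → ℕ) (g : K),
      (∀ t, i t ≠ j t) ∧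
      (∀ t t' : Fin s, t ≠ t' → ({i t, j t} : Finset (Fin n)) ≠ {i t', j t'}) ∧
      (∀ t, 1 ≤ m t) ∧
      g ∈ Algebra.adjoin F {y : K | ∃ a b : Fin n, y = z a - z b} ∧
      x = g * ∏ t, ((z (i t) - z (j t))⁻¹) ^ m t}

open Finset

theorem Submodule.mul_mem_of_mem_adjoin {R A : Type*} [CommSemiring R] [Semiring A] [Algebra R A]
    {W : Submodule R A} {s : Set A} (hs : ∀ x ∈ s, ∀ w ∈ W, x * w ∈ W) {g : A}
    (hg : g ∈ Algebra.adjoin R s) {w : A} (hw : w ∈ W) : g * w ∈ W := by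
  induction hg using Algebra.adjoin_induction generalizing w with
  | mem x hx => exact hs x hx w hw
  | algebraMap c => simpa [← Algebra.smul_def] using W.smul_mem c hw
  | add x y _ _ hx hy => simpa [add_mul] using add_mem (hx hw) (hy hw)
  | mul x y _ _ hx hy => simpa [mul_assoc] using hx (hy hw)

theorem Finset.prod_pow_update {ι M : Type*} [CommMonoid M] [DecidableEq ι] {s : Finset ι} {t : ι}
    (ht : t ∈ s) (y : ι → M) (m : ι → ℕ) (k : ℕ) :
    ∏ t' ∈ s, y t' ^ Function.update m t k t' = y t ^ k * ∏ t' ∈ s.erase t, y t' ^ m t' := by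
  rw [← mul_prod_erase s _ ht, Function.update_self]
  congr 1
  exact prod_congr rfl fun t' ht' => by rw [Function.update_of_ne (ne_of_mem_erase ht')]

theorem Finset.sum_update_sub_one {ι : Type*} [DecidableEq ι] {s : Finset ι} {f : ι → ℕ} {t : ι}
    (ht : t ∈ s) (hf : 1 ≤ f t) :
    ∑ t' ∈ s, Function.update f t (f t - 1) t' + 1 = ∑ t' ∈ s, f t' := by
  rw [sum_update_of_mem ht, sum_eq_add_sum_sdiff_singleton_of_mem ht]
  omega

namespace Derivation

variable {R A : Type*} [CommRing R] [CommRing A] [Algebra R A]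

theorem map_prod (δ : Derivation R A A) {ι : Type*} [DecidableEq ι] (s : Finset ι) (f : ι → A) :
    δ (∏ t ∈ s, f t) = ∑ t ∈ s, (∏ t' ∈ s.erase t, f t') * δ (f t) := by
  induction s using Finset.induction_on with
  | empty => simp
  | insert a s ha ih =>
    rw [prod_insert ha, leibniz, ih, sum_insert ha, erase_insert ha, smul_eq_mul, smul_eq_mul,
      mul_sum, add_comm, mul_comm]
    congr 1
    refine sum_congr rfl fun t ht => ?_
    rw [erase_insert_of_ne (ne_of_mem_of_not_mem ht ha).symm,
      prod_insert fun h => ha (mem_of_mem_erase h), mul_assoc]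

theorem map_mem_adjoin (δ : Derivation R A A) {s : Set A}
    (hs : ∀ x ∈ s, δ x ∈ Algebra.adjoin R s) {x : A} (hx : x ∈ Algebra.adjoin R s) :
    δ x ∈ Algebra.adjoin R s := by
  induction hx using Algebra.adjoin_induction with
  | mem x hx => exact hs x hx
  | algebraMap c => simp
  | add x y _ _ hx hy => simpa using add_mem hx hy
  | mul x y hx' hy' hx hy =>
    rw [leibniz, smul_eq_mul, smul_eq_mul]
    exact add_mem (mul_mem hx' hy) (mul_mem hy' hx)

section Field

variable {R K : Type*} [CommRing R] [Field K] [Algebra R K]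

theorem map_inv_pow (δ : Derivation R K K) (x : K) (k : ℕ) :
    δ (x⁻¹ ^ k) = -(k * x⁻¹ ^ (k + 1) * δ x) := by
  rcases k with _ | k
  · simp
  · rw [leibniz_pow, leibniz_inv]
    simp only [nsmul_eq_mul, smul_eq_mul, Nat.add_sub_cancel, Nat.cast_succ]
    ring

theorem map_prod_inv_pow (δ : Derivation R K K) {ι : Type*} [DecidableEq ι] (s : Finset ι)
    (x : ι → K) (m : ι → ℕ) :
    δ (∏ t ∈ s, (x t)⁻¹ ^ m t) =
      -∑ t ∈ s, (m t : K) * δ (x t) * ∏ t' ∈ s, (x t')⁻¹ ^ Function.update m t (m t + 1) t' := by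
  rw [map_prod, ← sum_neg_distrib]
  refine sum_congr rfl fun t ht => ?_
  rw [map_inv_pow, prod_pow_update ht]
  ring

end Field

end Derivation

theorem LinearIndependent.exists_dual_eq_ite {F M ι : Type*} [Field F] [AddCommGroup M]
    [Module F M] [DecidableEq ι] {v : ι → M} (hv : LinearIndependent F v) (i₀ : ι) :
    ∃ φ : M →ₗ[F] F, ∀ i, φ (v i) = if i = i₀ then 1 else 0 := by
  obtain ⟨φ, hφ⟩ := LinearMap.exists_extend ((Module.Basis.span hv).coord i₀)
  refine ⟨φ, fun i => ?_⟩
  have := LinearMap.congr_fun hφ (Module.Basis.span hv i)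
  rw [LinearMap.comp_apply, Submodule.subtype_apply, Module.Basis.coe_span_apply,
    Module.Basis.coord_apply, Module.Basis.repr_self, Finsupp.single_apply] at this
  rw [this, eq_comm]

namespace SimpleGraph

theorem Reachable.sub_mem {V M : Type*} [AddCommGroup M] {G : SimpleGraph V} {u : V → M}
    {S : AddSubgroup M} (hS : ∀ a b, G.Adj a b → u a - u b ∈ S) {v w : V} (h : G.Reachable v w) :
    u v - u w ∈ S := by
  obtain ⟨p⟩ := h
  induction p with
  | nil => simp
  | cons hadj _ ih => simpa using add_mem (hS _ _ hadj) ih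

end SimpleGraph

section
variable {R M V : Type*} [Ring R] [Nontrivial R] [AddCommGroup M] [Module R M] {u : V → M}
  {E : Set (V × V)}

theorem fst_ne_snd_of_linearIndepOn (hE : LinearIndepOn R (fun e => u e.1 - u e.2) E)
    {e : V × V} (he : e ∈ E) : e.1 ≠ e.2 := fun h => hE.ne_zero he (by simp [h])

theorem swap_notMem_of_linearIndepOn (hE : LinearIndepOn R (fun e => u e.1 - u e.2) E)
    {a b : V} (hab : (a, b) ∈ E) : (b, a) ∉ E := by
  intro hba
  have hne : (b, a) ≠ (a, b) := fun h => fst_ne_snd_of_linearIndepOn hE hab (Prod.mk.inj h).2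
  apply hE.notMem_span hba
  have := Submodule.subset_span (R := R) (Set.mem_image_of_mem (fun e => u e.1 - u e.2)
    (show (a, b) ∈ E \ {(b, a)} from ⟨hab, hne.symm⟩))
  simpa using neg_mem this

theorem isAcyclic_fromRel_of_linearIndepOn (hE : LinearIndepOn R (fun e => u e.1 - u e.2) E) :
    (SimpleGraph.fromRel fun a b => (a, b) ∈ E).IsAcyclic := by
  rw [SimpleGraph.isAcyclic_iff_forall_adj_isBridge]
  rintro v w hvw hreach
  obtain ⟨e₀, he₀, he₀vw⟩ : ∃ e₀ ∈ E, s(e₀.1, e₀.2) = s(v, w) := by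
    rcases hvw.2 with h | h
    · exact ⟨_, h, rfl⟩
    · exact ⟨_, h, Sym2.eq_swap⟩
  set S := Submodule.span R ((fun e => u e.1 - u e.2) '' (E \ {e₀}))
  have hS : ∀ e ∈ E, s(e.1, e.2) ≠ s(v, w) → u e.1 - u e.2 ∈ S := fun e he hne =>
    Submodule.subset_span ⟨e, ⟨he, fun h => hne (h ▸ he₀vw)⟩, rfl⟩
  have hreach_mem : u v - u w ∈ S.toAddSubgroup := by
    refine hreach.sub_mem fun a b hab => ?_
    rw [SimpleGraph.deleteEdges_adj, SimpleGraph.fromRel_adj, Set.mem_singleton_iff] at hab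
    obtain ⟨⟨-, h | h⟩, hne⟩ := hab
    · exact hS _ h hne
    · simpa using neg_mem (hS _ h (by rwa [Sym2.eq_swap]))
  apply hE.notMem_span he₀
  rcases Sym2.eq_iff.mp he₀vw with ⟨h₁, h₂⟩ | ⟨h₁, h₂⟩
  · simpa [h₁, h₂] using hreach_mem
  · simpa [h₁, h₂] using neg_mem hreach_mem

end

section
variable {F K ι : Type*} [Field F] [Field K] [Algebra F K] [DecidableEq ι]

theorem mul_prod_inv_pow {s : Finset ι} {x : ι → K} {m : ι → ℕ} {t : ι} (ht : t ∈ s)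
    (hx : x t ≠ 0) (hm : 1 ≤ m t) :
    x t * ∏ t' ∈ s, (x t')⁻¹ ^ m t' = ∏ t' ∈ s, (x t')⁻¹ ^ Function.update m t (m t - 1) t' := by
  obtain ⟨k, hk⟩ := Nat.exists_eq_add_of_le' hm
  rw [prod_pow_update ht, ← mul_prod_erase s _ ht, ← mul_assoc, hk, pow_succ', ← mul_assoc,
    mul_inv_cancel₀ hx, one_mul, Nat.add_sub_cancel]

theorem prod_inv_pow_eq_sum_of_relation {s : Finset ι} {x : ι → K} (hx : ∀ t ∈ s, x t ≠ 0)
    {c : ι → F} (hc : ∑ t ∈ s, c t • x t = 0) {t₀ : ι} (ht₀ : t₀ ∈ s) (hct₀ : c t₀ ≠ 0)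
    {m : ι → ℕ} (hm : ∀ t ∈ s, 1 ≤ m t) :
    ∏ t ∈ s, (x t)⁻¹ ^ m t = ∑ t ∈ s.erase t₀, (-(c t / c t₀)) •
      ∏ t' ∈ s, (x t')⁻¹ ^ Function.update (Function.update m t₀ (m t₀ + 1)) t (m t - 1) t' := by
  have hmul : ∏ t ∈ s, (x t)⁻¹ ^ m t =
      x t₀ * ∏ t ∈ s, (x t)⁻¹ ^ Function.update m t₀ (m t₀ + 1) t := by
    rw [mul_prod_inv_pow ht₀ (hx t₀ ht₀) (by simp)]
    simp
  have hxt₀ : x t₀ = ∑ t ∈ s.erase t₀, (-(c t / c t₀)) • x t := by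
    rw [← add_sum_erase s _ ht₀, add_eq_zero_iff_eq_neg] at hc
    calc x t₀ = (c t₀)⁻¹ • (c t₀ • x t₀) := (inv_smul_smul₀ hct₀ _).symm
      _ = _ := by
        rw [hc, smul_neg, smul_sum, ← sum_neg_distrib]
        refine sum_congr rfl fun t _ => ?_
        rw [smul_smul, neg_smul, div_eq_inv_mul]
  rw [hmul, hxt₀, sum_mul]
  refine sum_congr rfl fun t ht => ?_
  have htt₀ := ne_of_mem_erase ht
  rw [smul_mul_assoc, mul_prod_inv_pow (mem_of_mem_erase ht) (hx t (mem_of_mem_erase ht))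
    (by simpa [htt₀] using hm t (mem_of_mem_erase ht)), Function.update_of_ne htt₀]

theorem prod_inv_pow_mem_of_relation {W : Submodule F K} {s : Finset ι} {x : ι → K}
    (hx : ∀ t ∈ s, x t ≠ 0) {c : ι → F} (hc : ∑ t ∈ s, c t • x t = 0) {t₀ : ι} (ht₀ : t₀ ∈ s)
    (hct₀ : c t₀ ≠ 0)
    (herase : ∀ t ∈ s, ∀ m : ι → ℕ, (∀ t' ∈ s.erase t, 1 ≤ m t') →
      ∏ t' ∈ s.erase t, (x t')⁻¹ ^ m t' ∈ W)
    (m : ι → ℕ) (hm : ∀ t ∈ s, 1 ≤ m t) :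
    ∏ t ∈ s, (x t)⁻¹ ^ m t ∈ W := by
  induction h : ∑ t ∈ s.erase t₀, m t using Nat.strong_induction_on generalizing m with
  | _ N ih =>
    rw [prod_inv_pow_eq_sum_of_relation hx hc ht₀ hct₀ hm]
    refine sum_mem fun t ht => W.smul_mem _ ?_
    have htt₀ := ne_of_mem_erase ht
    have hts := mem_of_mem_erase ht
    set m' := Function.update (Function.update m t₀ (m t₀ + 1)) t (m t - 1)
    have hm' : ∀ t' ∈ s, t' ≠ t → 1 ≤ m' t' := fun t' ht' hne => by
      by_cases h' : t' = t₀
      · subst h'; simp [m', hne]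
      · simpa [m', hne, h'] using hm t' ht'
    rcases (hm t hts).eq_or_lt with h₁ | h₂
    · rw [← prod_erase (a := t) _ (by simp [m', ← h₁])]
      exact herase t hts m' fun t' ht' => hm' t' (mem_of_mem_erase ht') (ne_of_mem_erase ht')
    · refine ih _ ?_ m' (fun t' ht' => ?_) rfl
      · have := sum_update_sub_one (f := Function.update m t₀ (m t₀ + 1)) ht
          (by simpa [htt₀] using hm t hts)
        rw [sum_update_of_notMem (notMem_erase t₀ s), Function.update_of_ne htt₀] at this
        change ∑ t' ∈ s.erase t₀, m' t' + 1 = _ at this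
        omega
      · by_cases h' : t' = t
        · subst h'; simp [m']; omega
        · exact hm' t' ht' h'

end

section
variable {F K V : Type*} [Field F] [Field K] [Algebra F K] [Fintype V] [DecidableEq V]
  {u : V → K} {D : V → Derivation F K K} {W : Submodule F K}

theorem exists_derivation_eq_ite (hD : ∀ a b, D a (u b) = if a = b then 1 else 0)
    (hWD : ∀ a, ∀ x ∈ W, D a x ∈ W) {E : Finset (V × V)}
    (hE : LinearIndepOn F (fun e => u e.1 - u e.2) (E : Set (V × V))) {e₀ : V × V}
    (he₀ : e₀ ∈ E) :
    ∃ δ : Derivation F K K, (∀ x ∈ W, δ x ∈ W) ∧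
      ∀ e ∈ E, δ (u e.1 - u e.2) = if e = e₀ then 1 else 0 := by
  obtain ⟨φ, hφ⟩ := LinearIndependent.exists_dual_eq_ite hE ⟨e₀, he₀⟩
  have happly : ∀ y, (∑ a, φ (u a) • D a) y = ∑ a, φ (u a) • D a y := fun y => by
    rw [← Derivation.coeFnAddMonoidHom_apply, map_sum]
    simp
  refine ⟨∑ a, φ (u a) • D a, fun x hx => ?_, fun e he => ?_⟩
  · rw [happly]
    exact sum_mem fun a _ => W.smul_mem _ (hWD a x hx)
  · have hφe := hφ ⟨e, he⟩
    simp only [Subtype.mk.injEq, map_sub] at hφe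
    rw [happly]
    have hDu : ∀ b, ∑ a, φ (u a) • D a (u b) = algebraMap F K (φ (u b)) := fun b => by
      simp [hD, Algebra.algebraMap_eq_smul_one]
    simp only [map_sub, smul_sub, sum_sub_distrib, hDu]
    rw [← map_sub, hφe]
    split_ifs <;> simp

variable [CharZero F] {r : ℕ}

theorem prod_inv_pow_mem_of_linearIndepOn (hD : ∀ a b, D a (u b) = if a = b then 1 else 0)
    (hWD : ∀ a, ∀ x ∈ W, D a x ∈ W)
    (hWindep : ∀ E : Finset (V × V), LinearIndepOn F (fun e => u e.1 - u e.2) (E : Set (V × V)) →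
      E.card ≤ r → ∏ e ∈ E, (u e.1 - u e.2)⁻¹ ∈ W)
    {E : Finset (V × V)} (hE : LinearIndepOn F (fun e => u e.1 - u e.2) (E : Set (V × V)))
    (hEr : E.card ≤ r) (m : V × V → ℕ) (hm : ∀ e ∈ E, 1 ≤ m e) :
    ∏ e ∈ E, (u e.1 - u e.2)⁻¹ ^ m e ∈ W := by
  induction h : ∑ e ∈ E, m e using Nat.strong_induction_on generalizing m with
  | _ N ih =>
    by_cases hone : ∀ e ∈ E, m e = 1
    · rw [prod_congr rfl fun e he => by rw [hone e he, pow_one]]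
      exact hWindep E hE hEr
    push Not at hone
    obtain ⟨e₀, he₀, hne⟩ := hone
    have h₂ : 2 ≤ m e₀ := by have := hm e₀ he₀; omega
    set m' := Function.update m e₀ (m e₀ - 1)
    have hm' : ∀ e ∈ E, 1 ≤ m' e := fun e he => by
      by_cases hee : e = e₀
      · subst hee; simp [m']; omega
      · simpa [m', hee] using hm e he
    have hsum : ∑ e ∈ E, m' e + 1 = N := h ▸ sum_update_sub_one he₀ (hm e₀ he₀)
    have hmem := ih _ (by omega) m' hm' rfl
    obtain ⟨δ, hδW, hδ⟩ := exists_derivation_eq_ite hD hWD hE he₀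
    have hδP : δ (∏ e ∈ E, (u e.1 - u e.2)⁻¹ ^ m' e) =
        algebraMap F K (-((m e₀ - 1 : ℕ) : F)) * ∏ e ∈ E, (u e.1 - u e.2)⁻¹ ^ m e := by
      rw [δ.map_prod_inv_pow, sum_eq_single_of_mem e₀ he₀ fun e he hne => by simp [hδ e he, hne],
        hδ e₀ he₀, if_pos rfl]
      have : Function.update m' e₀ (m' e₀ + 1) = m := by
        simp only [m', Function.update_idem, Function.update_self]
        rw [Nat.sub_add_cancel (by omega), Function.update_eq_self]
      rw [this]
      simp [m']
    have hc : (-((m e₀ - 1 : ℕ) : F)) ≠ 0 := by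
      rw [neg_ne_zero, Nat.cast_ne_zero]; omega
    have : ∏ e ∈ E, (u e.1 - u e.2)⁻¹ ^ m e =
        (-((m e₀ - 1 : ℕ) : F))⁻¹ • δ (∏ e ∈ E, (u e.1 - u e.2)⁻¹ ^ m' e) := by
      rw [hδP, ← Algebra.smul_def, inv_smul_smul₀ hc]
    rw [this]
    exact W.smul_mem _ (hδW _ hmem)

theorem prod_inv_pow_mem (hD : ∀ a b, D a (u b) = if a = b then 1 else 0)
    (hWD : ∀ a, ∀ x ∈ W, D a x ∈ W)
    (hWindep : ∀ E : Finset (V × V), LinearIndepOn F (fun e => u e.1 - u e.2) (E : Set (V × V)) →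
      E.card ≤ r → ∏ e ∈ E, (u e.1 - u e.2)⁻¹ ∈ W)
    (E : Finset (V × V)) (hE : ∀ e ∈ E, e.1 ≠ e.2) (hEr : E.card ≤ r) (m : V × V → ℕ)
    (hm : ∀ e ∈ E, 1 ≤ m e) :
    ∏ e ∈ E, (u e.1 - u e.2)⁻¹ ^ m e ∈ W := by
  induction E using Finset.strongInduction generalizing m with
  | H E ihE =>
    by_cases hli : LinearIndepOn F (fun e => u e.1 - u e.2) (E : Set (V × V))
    · exact prod_inv_pow_mem_of_linearIndepOn hD hWD hWindep hli hEr m hm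
    obtain ⟨c, hc, e₀, he₀, hce₀⟩ := not_linearIndepOn_finset_iff.mp hli
    have hu : Function.Injective u := fun a b hab => by
      simpa [hD] using congrArg (D a) hab
    exact prod_inv_pow_mem_of_relation (fun e he => sub_ne_zero.mpr (hu.ne (hE e he))) hc he₀ hce₀
      (fun e he m' hm' => ihE _ (erase_ssubset he) (fun e' he' => hE e' (mem_of_mem_erase he'))
        (card_erase_le.trans hEr) m' hm') m hm

end

section
variable {F K : Type*} [Field F] [Field K] [Algebra F K] {n : ℕ} {z : Fin n → K} {r : ℕ}

theorem mul_mem_fil (a b : Fin n) {x : K} (hx : x ∈ fil F z r) : (z a - z b) * x ∈ fil F z r := by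
  suffices fil F z r ≤ (fil F z r).comap (LinearMap.mulLeft F (z a - z b)) from this hx
  refine Submodule.span_le.mpr ?_
  rintro _ ⟨s, hs, i, j, m, g, hij, hdist, hm, hg, rfl⟩
  exact Submodule.subset_span ⟨s, hs, i, j, m, _, hij, hdist, hm,
    mul_mem (Algebra.subset_adjoin ⟨a, b, rfl⟩) hg, (mul_assoc _ _ _).symm⟩

theorem Derivation.map_mem_fil (δ : Derivation F K K)
    (hδ : ∀ a b, δ (z a - z b) ∈ Algebra.adjoin F {y : K | ∃ a b : Fin n, y = z a - z b}) {x : K}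
    (hx : x ∈ fil F z r) : δ x ∈ fil F z r := by
  suffices fil F z r ≤ (fil F z r).comap (δ : K →ₗ[F] K) from this hx
  refine Submodule.span_le.mpr ?_
  rintro _ ⟨s, hs, i, j, m, g, hij, hdist, hm, hg, rfl⟩
  change δ _ ∈ fil F z r
  rw [δ.leibniz, δ.map_prod_inv_pow, smul_eq_mul, smul_eq_mul, mul_neg, mul_sum]
  refine add_mem (neg_mem (sum_mem fun t _ => Submodule.subset_span ?_)) (Submodule.subset_span
    ⟨s, hs, i, j, m, δ g, hij, hdist, hm,
      δ.map_mem_adjoin (by rintro _ ⟨a, b, rfl⟩; exact hδ a b) hg, mul_comm _ _⟩)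
  refine ⟨s, hs, i, j, Function.update m t (m t + 1), g * ((m t : K) * δ (z (i t) - z (j t))),
    hij, hdist, fun t' => ?_, mul_mem hg (mul_mem (natCast_mem _ _) (hδ _ _)), by ring⟩
  by_cases h : t' = t
  · subst h; simp
  · simpa [h] using hm t'

theorem prod_inv_mem_fil (E : Finset (Fin n × Fin n)) (hE : ∀ e ∈ E, e.1 ≠ e.2)
    (hanti : ∀ a b, (a, b) ∈ E → (b, a) ∉ E) (hEr : E.card ≤ r) :
    ∏ e ∈ E, (z e.1 - z e.2)⁻¹ ∈ fil F z r := by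
  set f := E.equivFin.symm
  refine Submodule.subset_span ⟨E.card, hEr, fun t => (f t).1.1, fun t => (f t).1.2, fun _ => 1, 1,
    fun t => hE _ (f t).2, fun t t' htt' hpair => ?_, fun _ => le_rfl, one_mem _, ?_⟩
  · rw [← Finset.coe_inj, Finset.coe_pair, Finset.coe_pair, Set.pair_eq_pair_iff] at hpair
    dsimp only at hpair
    rcases hpair with ⟨h₁, h₂⟩ | ⟨h₁, h₂⟩
    · exact htt' (f.injective (Subtype.ext (Prod.ext h₁ h₂)))
    · exact hanti _ _ (f t).2 (by rw [h₁, h₂]; exact (f t').2)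
  · rw [one_mul, ← prod_coe_sort E, ← f.prod_comp]
    simp

theorem fil_le {W : Submodule F K} (hW : ∀ a b, ∀ x ∈ W, (z a - z b) * x ∈ W)
    (hWprod : ∀ E : Finset (Fin n × Fin n), (∀ e ∈ E, e.1 ≠ e.2) → E.card ≤ r →
      ∀ m : Fin n × Fin n → ℕ, (∀ e ∈ E, 1 ≤ m e) → ∏ e ∈ E, (z e.1 - z e.2)⁻¹ ^ m e ∈ W) :
    fil F z r ≤ W := by
  refine Submodule.span_le.mpr ?_
  rintro _ ⟨s, hs, i, j, m, g, hij, hdist, hm, hg, rfl⟩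
  refine Submodule.mul_mem_of_mem_adjoin (by rintro _ ⟨a, b, rfl⟩; exact hW a b) hg ?_
  set f : Fin s → Fin n × Fin n := fun t => (i t, j t)
  have hf : f.Injective := fun t t' h => by
    by_contra hne
    exact hdist t t' hne (by simp only [f, Prod.mk.injEq] at h; rw [h.1, h.2])
  have hprod : ∏ t, (z (i t) - z (j t))⁻¹ ^ m t =
      ∏ e ∈ univ.image f, (z e.1 - z e.2)⁻¹ ^ Function.extend f m 0 e := by
    rw [prod_image hf.injOn]
    simp [hf.extend_apply, f]
  rw [hprod]
  refine hWprod _ ?_ (card_image_le.trans (by simpa using hs)) _ ?_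
  · simpa [f] using hij
  · simpa [hf.extend_apply] using hm

end

theorem fil_eq_span_forests_general
    (F K : Type*) [Field F] [CharZero F] [Field K] [Algebra F K]
    (n : ℕ) (z : Fin n → K)
    (D : Fin n → Module.End F K)
    (hLeib : ∀ (i : Fin n) (x y : K), D i (x * y) = x * D i y + D i x * y)
    (hDz : ∀ i j : Fin n, D i (z j) = if i = j then 1 else 0)
    (r : ℕ) :
    fil F z r =
      sInf {W : Submodule F K |
        (∀ E : Finset (Fin n × Fin n),
          (∀ e ∈ E, e.1 ≠ e.2) →
          (∀ a b : Fin n, (a, b) ∈ E → (b, a) ∉ E) →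
          (SimpleGraph.fromRel fun a b : Fin n => (a, b) ∈ E).IsAcyclic →
          E.card ≤ r →
          (∏ e ∈ E, (z e.1 - z e.2)⁻¹) ∈ W) ∧
        (∀ a b : Fin n, a < b → ∀ x ∈ W, (z a - z b) * x ∈ W) ∧
        (∀ i : Fin n, ∀ x ∈ W, D i x ∈ W)} := by
  let D' a : Derivation F K K := Derivation.mk' (D a) fun x y => by
    rw [hLeib, smul_eq_mul, smul_eq_mul, mul_comm (D a x)]
  have hD' : ∀ a b, D' a (z b) = if a = b then 1 else 0 := hDz
  apply le_antisymm
  · refine le_sInf fun W ⟨hWforest, hWmul, hWD⟩ => fil_le (fun a b x hx => ?_)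
      fun E hE hEr m hm => prod_inv_pow_mem hD' hWD (fun E hli hEr => hWforest E
        (fun _ he => fst_ne_snd_of_linearIndepOn hli he)
        (fun _ _ => swap_notMem_of_linearIndepOn hli)
        (isAcyclic_fromRel_of_linearIndepOn hli) hEr) E hE hEr m hm
    rcases lt_trichotomy a b with h | rfl | h
    · exact hWmul a b h x hx
    · simp
    · simpa only [← neg_mul, neg_sub] using W.neg_mem (hWmul b a h x hx)
  · refine sInf_le ⟨fun E hE hanti _ hEr => prod_inv_mem_fil E hE hanti hEr,
      fun a b _ x hx => mul_mem_fil a b hx, fun a x hx => (D' a).map_mem_fil (fun a' b' => ?_) hx⟩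
    rw [map_sub, hD', hD']
    exact sub_mem (by split_ifs <;> simp) (by split_ifs <;> simp)

/-- **Lemma 6.3 of Bakalov–De Sole–Heluani–Kac**: let `F` be a field of characteristic
`0` and `K = F(z_1,…,z_n)` the rational function field in `n ≥ 1` variables (formalized
as a field extension generated by an algebraically independent family `z`), with partial
derivatives `D i = ∂_{z_i}`. For every `r ≥ 0`, the filtration component `fil^r` equals
the smallest `F`-linear subspace of `K` containing `p_E = ∏_{(i,j) ∈ E} (z_i - z_j)⁻¹`
for every forest `E` of oriented edges with at most `r` edges, and stable under
multiplication by each difference `z_i - z_j` (`i < j`) and under each `∂_{z_i}`. -/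
theorem fil_eq_span_forests
    (F K : Type*) [Field F] [CharZero F] [Field K] [Algebra F K]
    (n : ℕ) (hn : 1 ≤ n) (z : Fin n → K)
    (hz : AlgebraicIndependent F z)
    (hgen : IntermediateField.adjoin F (Set.range z) = ⊤)
    (D : Fin n → Module.End F K)
    (hLeib : ∀ (i : Fin n) (x y : K), D i (x * y) = x * D i y + D i x * y)
    (hDz : ∀ i j : Fin n, D i (z j) = if i = j then 1 else 0)
    (r : ℕ) :
    fil F z r =
      sInf {W : Submodule F K |
        (∀ E : Finset (Fin n × Fin n),
          (∀ e ∈ E, e.1 ≠ e.2) →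
          (∀ a b : Fin n, (a, b) ∈ E → (b, a) ∉ E) →
          (SimpleGraph.fromRel fun a b : Fin n => (a, b) ∈ E).IsAcyclic →
          E.card ≤ r →
          (∏ e ∈ E, (z e.1 - z e.2)⁻¹) ∈ W) ∧
        (∀ a b : Fin n, a < b → ∀ x ∈ W, (z a - z b) * x ∈ W) ∧
        (∀ i : Fin n, ∀ x ∈ W, D i x ∈ W)} :=
  fil_eq_span_forests_general F K n z D hLeib hDz r
end
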